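/- Continuity of the entropy of entanglement: the function H is continuous on the set of covariance matrices, i.e. on the set of real symmetric 2n×2n matrices γ such that γ − iσ is positive semidefinite as a complex Hermitian matrix. -/

import Mathlib

open Matrix
open scoped ComplexOrder

/-- The standard symplectic form σ = [[0, Iₙ], [−Iₙ, 0]] on ℝ^{2n},
indexed by `Fin n ⊕ Fin n`. -/
def symplJ (n : ℕ) : Matrix (Fin n ⊕ Fin n) (Fin n ⊕ Fin n) ℝ :=
  Matrix.fromBlocks 0 1 (-1) 0

/-- `S ∈ Sp(2n)`: a real `2n × 2n` matrix with `Sᵀ σ S = σ`. -/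
def IsSymplectic {n : ℕ} (S : Matrix (Fin n ⊕ Fin n) (Fin n ⊕ Fin n) ℝ) : Prop :=
  Sᵀ * symplJ n * S = symplJ n

/-- The block-diagonal matrix `diag(D, D)` built from the diagonal entries `d`. -/
def Dtilde {n : ℕ} (d : Fin n → ℝ) : Matrix (Fin n ⊕ Fin n) (Fin n ⊕ Fin n) ℝ :=
  Matrix.fromBlocks (Matrix.diagonal d) 0 0 (Matrix.diagonal d)

/-- `g(x) = x·log x` (with `g(0) = 0`, since `Real.log 0 = 0`). -/
noncomputable def entg (x : ℝ) : ℝ := x * Real.log x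

/-!
By Williamson's theorem `(σγ) S = S (σ diag(D, D))` for a symplectic `S`, hence
`det (x + (σγ)²) = (∏ₖ (x - dₖ²))²`. The left side depends continuously on `γ`, and the right
side determines the multiset of the positive numbers `dₖ`. So as `γ → γ₀` the tuples of
symplectic eigenvalues stay bounded, each of their limit points is a permutation of the tuple
of `γ₀`, and the symmetric function `H` of the tuple converges to its value at `γ₀`.
-/

section Symplectic

variable {n : ℕ} {S γ : Matrix (Fin n ⊕ Fin n) (Fin n ⊕ Fin n) ℝ}

lemma symplJ_transpose (n : ℕ) : (symplJ n)ᵀ = -symplJ n := by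
  simp [symplJ, fromBlocks_transpose, fromBlocks_neg]

lemma symplJ_mul_symplJ (n : ℕ) : symplJ n * symplJ n = -1 := by
  simp [symplJ, fromBlocks_multiply, ← fromBlocks_one, fromBlocks_neg]

lemma dotProduct_symplJ_mulVec_self (x : Fin n ⊕ Fin n → ℝ) : x ⬝ᵥ symplJ n *ᵥ x = 0 := by
  have h : x ⬝ᵥ symplJ n *ᵥ x = x ⬝ᵥ (symplJ n)ᵀ *ᵥ x := by
    rw [dotProduct_mulVec, ← mulVec_transpose, dotProduct_comm]
  rw [symplJ_transpose, neg_mulVec, dotProduct_neg] at h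
  linarith

lemma IsSymplectic.isUnit_det (hS : IsSymplectic S) : IsUnit S.det := by
  have h := congrArg (fun M => (M * M).det) hS
  simp only [symplJ_mul_symplJ, det_mul, det_transpose] at h
  exact isUnit_iff_ne_zero.2 fun h0 => by simp [h0, det_neg] at h

lemma IsSymplectic.mul_symplJ_mul_transpose (hS : IsSymplectic S) :
    S * symplJ n * Sᵀ = symplJ n := by
  have hinv : -(symplJ n * Sᵀ * symplJ n) * S = 1 := by
    rw [neg_mul, Matrix.mul_assoc, Matrix.mul_assoc, ← Matrix.mul_assoc Sᵀ, hS,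
      symplJ_mul_symplJ, neg_neg]
  have h := congrArg (· * symplJ n) (mul_eq_one_comm.1 hinv)
  simp only [Matrix.mul_neg, neg_mul, Matrix.one_mul, Matrix.mul_assoc,
    symplJ_mul_symplJ] at h
  simpa [Matrix.mul_assoc] using h

lemma IsSymplectic.symplJ_mul_mul_eq_mul {M : Matrix (Fin n ⊕ Fin n) (Fin n ⊕ Fin n) ℝ}
    (hS : IsSymplectic S) (hSγ : Sᵀ * γ * S = M) :
    symplJ n * γ * S = S * (symplJ n * M) := by
  conv_lhs => rw [← hS.mul_symplJ_mul_transpose]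
  simp only [← hSγ, Matrix.mul_assoc]

lemma Dtilde_eq_diagonal (d : Fin n → ℝ) : Dtilde d = diagonal (Sum.elim d d) :=
  fromBlocks_diagonal d d

lemma det_Dtilde (d : Fin n → ℝ) : (Dtilde d).det = (∏ k, d k) ^ 2 := by
  rw [Dtilde_eq_diagonal, det_diagonal, Fintype.prod_sum_type, sq]
  rfl

lemma symplJ_mul_Dtilde_sq (d : Fin n → ℝ) :
    (symplJ n * Dtilde d) ^ 2 = -Dtilde (fun k => d k ^ 2) := by
  rw [sq, symplJ, Dtilde, Dtilde, fromBlocks_multiply, fromBlocks_multiply, fromBlocks_neg]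
  congr 1 <;> simp [diagonal_mul_diagonal, sq]

lemma det_smul_one_add_sq_eq_of_williamson {d : Fin n → ℝ} (hS : IsSymplectic S)
    (hSγ : Sᵀ * γ * S = Dtilde d) (x : ℝ) :
    (x • 1 + (symplJ n * γ) ^ 2).det = (∏ k, (x - d k ^ 2)) ^ 2 := by
  have hshift : x • 1 - Dtilde (fun k => d k ^ 2) = Dtilde (fun k => x - d k ^ 2) := by
    rw [Dtilde_eq_diagonal, Dtilde_eq_diagonal, smul_one_eq_diagonal, diagonal_sub]
    congr 1
    ext (k | k) <;> rfl
  have hconj : (x • 1 + (symplJ n * γ) ^ 2) * S = S * Dtilde (fun k => x - d k ^ 2) := by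
    rw [← hshift, sub_eq_add_neg, ← symplJ_mul_Dtilde_sq, Matrix.mul_add, Matrix.add_mul,
      sq, sq, Matrix.mul_assoc, hS.symplJ_mul_mul_eq_mul hSγ, ← Matrix.mul_assoc,
      hS.symplJ_mul_mul_eq_mul hSγ, smul_mul, Matrix.one_mul, Matrix.mul_smul, Matrix.mul_one,
      Matrix.mul_assoc]
  have h := congrArg det hconj
  rw [det_mul, det_mul, mul_comm, det_Dtilde] at h
  exact hS.isUnit_det.mul_left_cancel h

def IsCovarianceMatrix (γ : Matrix (Fin n ⊕ Fin n) (Fin n ⊕ Fin n) ℝ) : Prop :=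
  γ.IsSymm ∧
    (γ.map (Complex.ofReal ·) - Complex.I • (symplJ n).map (Complex.ofReal ·)).PosSemidef

/- For real `x` the form of `γ - iσ` at `x` is `xᵀγx`, as `xᵀσx = 0`. If it vanishes, `x` lies
in the kernel of `γ - iσ`, and the imaginary part of `(γ - iσ)x = 0` reads `σx = 0`. -/
theorem IsCovarianceMatrix.posDef (hγ : IsCovarianceMatrix γ) : γ.PosDef := by
  obtain ⟨hsymm, hpsd⟩ := hγ
  refine posDef_iff_dotProduct_mulVec.2 ⟨hsymm, fun x hx => ?_⟩
  set z : Fin n ⊕ Fin n → ℂ := fun i => x i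
  have hcast (M : Matrix (Fin n ⊕ Fin n) (Fin n ⊕ Fin n) ℝ) :
      M.map (Complex.ofReal ·) *ᵥ z = fun i => ((M *ᵥ x) i : ℂ) :=
    funext fun i => (Complex.ofRealHom.map_mulVec M x i).symm
  have hform : star z ⬝ᵥ (γ.map (Complex.ofReal ·) -
      Complex.I • (symplJ n).map (Complex.ofReal ·)) *ᵥ z = ((x ⬝ᵥ γ *ᵥ x : ℝ) : ℂ) := by
    have hdot (v : Fin n ⊕ Fin n → ℝ) :
        star z ⬝ᵥ (fun i => (v i : ℂ)) = ((x ⬝ᵥ v : ℝ) : ℂ) := by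
      simp [z, dotProduct]
    rw [sub_mulVec, dotProduct_sub, smul_mulVec, dotProduct_smul, hcast, hcast, hdot, hdot,
      dotProduct_symplJ_mulVec_self]
    simp
  have hnonneg := hpsd.dotProduct_mulVec_nonneg z
  rw [hform, Complex.zero_le_real] at hnonneg
  refine hnonneg.lt_of_ne fun h0 => hx ?_
  have hker := (hpsd.dotProduct_mulVec_zero_iff z).1 (by rw [hform, ← h0, Complex.ofReal_zero])
  rw [sub_mulVec, smul_mulVec, hcast, hcast] at hker
  have hσx : symplJ n *ᵥ x = 0 := funext fun i => by
    simpa using congrArg Complex.im (congrFun hker i)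
  calc x = -(symplJ n *ᵥ (symplJ n *ᵥ x)) := by
        rw [mulVec_mulVec, symplJ_mul_symplJ, neg_mulVec, one_mulVec, neg_neg]
    _ = 0 := by rw [hσx, mulVec_zero, neg_zero]

end Symplectic

section SymplecticSpectrum

variable {ι : Type*} [Fintype ι]

open Polynomial in
lemma map_univ_val_eq_of_prod_sub_sq_eq {R : Type*} [CommRing R] [IsDomain R] [Infinite R]
    {a b : ι → R} (h : ∀ x, (∏ k, (x - a k)) ^ 2 = (∏ k, (x - b k)) ^ 2) :
    Finset.univ.val.map a = Finset.univ.val.map b := by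
  have hroots (c : ι → R) : (∏ k, (X - C (c k))).roots = Finset.univ.val.map c := by
    have h := roots_multiset_prod_X_sub_C (Finset.univ.val.map c)
    rwa [Multiset.map_map] at h
  have hsq : (∏ k, (X - C (a k))) ^ 2 = (∏ k, (X - C (b k))) ^ 2 :=
    Polynomial.funext fun x => by simpa [eval_prod] using h x
  have h2 := congrArg roots hsq
  rw [roots_pow, roots_pow, hroots, hroots] at h2
  exact nsmul_right_injective two_ne_zero h2

lemma sum_comp_eq_of_prod_sub_sq_sq_eq {e d : ι → ℝ} (he : 0 ≤ e) (hd : 0 ≤ d)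
    (h : ∀ x, (∏ k, (x - e k ^ 2)) ^ 2 = (∏ k, (x - d k ^ 2)) ^ 2) (g : ℝ → ℝ) :
    ∑ k, g (e k) = ∑ k, g (d k) := by
  have hsqrt {c : ι → ℝ} (hc : 0 ≤ c) :
      ((Finset.univ.val.map fun k => c k ^ 2).map (g ∘ Real.sqrt)).sum = ∑ k, g (c k) := by
    rw [Multiset.map_map]
    exact congrArg Multiset.sum (Multiset.map_congr rfl fun k _ => by simp [Real.sqrt_sq (hc k)])
  rw [← hsqrt he, ← hsqrt hd, map_univ_val_eq_of_prod_sub_sq_eq h]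

lemma norm_le_prod_neg_one_sub_sq_sq (d : ι → ℝ) : ‖d‖ ≤ (∏ k, (-1 - d k ^ 2)) ^ 2 := by
  classical
  have hfactor (j : ι) : 1 + d j ^ 2 ≤ (-1 - d j ^ 2) ^ 2 := by nlinarith [sq_nonneg (d j)]
  rw [← Finset.prod_pow]
  refine pi_norm_le_iff_of_nonneg (by positivity) |>.2 fun k => ?_
  calc ‖d k‖ ≤ 1 + d k ^ 2 := by
        rw [Real.norm_eq_abs]; nlinarith [abs_nonneg (d k), sq_abs (d k), sq_nonneg (|d k| - 1)]
    _ ≤ (-1 - d k ^ 2) ^ 2 := hfactor k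
    _ ≤ (-1 - d k ^ 2) ^ 2 * ∏ j ∈ Finset.univ.erase k, (-1 - d j ^ 2) ^ 2 :=
        le_mul_of_one_le_right (sq_nonneg _)
          (Finset.one_le_prod fun j _ => le_trans (by nlinarith [sq_nonneg (d j)]) (hfactor j))
    _ = ∏ j, (-1 - d j ^ 2) ^ 2 :=
        Finset.mul_prod_erase _ (fun j => (-1 - d j ^ 2) ^ 2) (Finset.mem_univ k)

noncomputable def entanglementEntropy (d : ι → ℝ) : ℝ :=
  ∑ k, (entg ((d k + 1) / 2) - entg ((d k - 1) / 2))

lemma continuous_entanglementEntropy : Continuous (entanglementEntropy : (ι → ℝ) → ℝ) := by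
  have : Continuous entg := Real.continuous_mul_log
  unfold entanglementEntropy
  fun_prop

end SymplecticSpectrum

open Filter Topology in
theorem IsCompact.tendsto_of_tendsto_invariant {α X Y Z : Type*} [TopologicalSpace X]
    [TopologicalSpace Y] [TopologicalSpace Z] [T2Space Z] {K : Set X} (hK : IsCompact K)
    {l : Filter α} {u : α → X} (hu : ∀ᶠ a in l, u a ∈ K) {p : X → Z} (hp : Continuous p)
    {x₀ : X} (hpu : Tendsto (p ∘ u) l (𝓝 (p x₀))) {h : X → Y} (hh : Continuous h)
    (hfiber : ∀ x ∈ K, p x = p x₀ → h x = h x₀) :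
    Tendsto (h ∘ u) l (𝓝 (h x₀)) := by
  have hcluster : ∀ x ∈ K, MapClusterPt x l u → x ∈ {x ∈ K | p x = p x₀} := fun x hx hxu =>
    ⟨hx, eq_of_nhds_neBot ((hxu.tendsto_comp (hp.tendsto x)).clusterPt.mono hpu)⟩
  exact (hh.tendsto_nhdsSet_nhds fun x hx => hfiber x hx.1 hx.2).comp
    (hK.tendsto_nhdsSet_of_mapClusterPt hu hcluster)

open Filter Topology Metric in
/-- **Continuity of the entropy of entanglement.**  Let `f` assign to each
positive definite `γ` its tuple of symplectic eigenvalues (decreasing order, as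
furnished by Williamson's theorem).  Then the entropy of entanglement
`H(γ) = Σₖ [g((dₖ+1)/2) − g((dₖ−1)/2)]` is continuous on the set of covariance
matrices, i.e. on the set of real symmetric `γ` such that `γ − iσ` is positive
semidefinite as a complex Hermitian matrix. -/
theorem entanglement_entropy_continuous (n : ℕ)
    (f : Matrix (Fin n ⊕ Fin n) (Fin n ⊕ Fin n) ℝ → (Fin n → ℝ))
    (hf : ∀ γ : Matrix (Fin n ⊕ Fin n) (Fin n ⊕ Fin n) ℝ, γ.PosDef →
      ∃ S, IsSymplectic S ∧ (∀ i, 0 < f γ i) ∧ Antitone (f γ) ∧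
        Sᵀ * γ * S = Dtilde (f γ)) :
    ContinuousOn
      (fun γ => ∑ k : Fin n, (entg ((f γ k + 1) / 2) - entg ((f γ k - 1) / 2)))
      {γ : Matrix (Fin n ⊕ Fin n) (Fin n ⊕ Fin n) ℝ | γ.IsSymm ∧
        (γ.map (Complex.ofReal ·) -
          Complex.I • (symplJ n).map (Complex.ofReal ·)).PosSemidef} := by
  have hspec : ∀ γ, IsCovarianceMatrix γ →
      0 ≤ f γ ∧ ∀ x : ℝ, (x • 1 + (symplJ n * γ) ^ 2).det = (∏ k, (x - f γ k ^ 2)) ^ 2 := by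
    intro γ hγ
    obtain ⟨S, hS, hpos, -, hSγ⟩ := hf γ hγ.posDef
    exact ⟨fun k => (hpos k).le, det_smul_one_add_sq_eq_of_williamson hS hSγ⟩
  intro γ₀ hγ₀
  set p : (Fin n → ℝ) → ℝ → ℝ := fun d x => (∏ k, (x - d k ^ 2)) ^ 2
  have hp : Continuous p := continuous_pi fun x => by fun_prop
  have hpf : Tendsto (p ∘ f) (𝓝[{γ | IsCovarianceMatrix γ}] γ₀) (𝓝 (p (f γ₀))) := by
    have hdet : Continuous fun γ : Matrix (Fin n ⊕ Fin n) (Fin n ⊕ Fin n) ℝ =>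
        fun x : ℝ => (x • 1 + (symplJ n * γ) ^ 2).det :=
      continuous_pi fun x => by fun_prop
    rw [show p (f γ₀) = _ from funext fun x => ((hspec γ₀ hγ₀).2 x).symm]
    exact ((hdet.tendsto γ₀).mono_left nhdsWithin_le_nhds).congr'
      (eventually_nhdsWithin_of_forall fun γ hγ => funext fun x => (hspec γ hγ).2 x)
  have hbound : ∀ᶠ γ in 𝓝[{γ | IsCovarianceMatrix γ}] γ₀,
      f γ ∈ closedBall 0 (p (f γ₀) (-1) + 1) ∩ Set.Ici 0 := by
    filter_upwards [self_mem_nhdsWithin,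
      (((continuous_apply (-1)).tendsto _).comp hpf).eventually
        (eventually_le_nhds (lt_add_one _))] with γ hγ hle
    exact ⟨mem_closedBall_zero_iff.2 ((norm_le_prod_neg_one_sub_sq_sq _).trans hle),
      (hspec γ hγ).1⟩
  exact ((isCompact_closedBall _ _).inter_right isClosed_Ici).tendsto_of_tendsto_invariant
    hbound hp hpf continuous_entanglementEntropy fun d hd hpd =>
      sum_comp_eq_of_prod_sub_sq_sq_eq hd.2 (hspec γ₀ hγ₀).1 (congrFun hpd)
        fun y => entg ((y + 1) / 2) - entg ((y - 1) / 2)
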